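/- Let Ω ⊂ ℝⁿ be open, V compactly contained in Ω, α ∈ (0,1), and let a, b ∈ C^{0,α}(Ω). Denote by a_ε = a * ψ_ε the mollification with a standard mollifier ψ_ε. Then for j ∈ {0,1} and all small ε > 0, ‖(ab)_ε − a_ε b_ε‖_{C^j(V)} ≤ C ε^{2α−j}, where C depends only on the C^{0,α} norms of a and b on Ω. -/

import Mathlib

open MeasureTheory Metric Set Function
open scoped Convolution Topology

set_option maxHeartbeats 1000000

noncomputable section

/-- Euclidean space `ℝⁿ`. -/
abbrev En (n : ℕ) := EuclideanSpace ℝ (Fin n)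

/-- `ψ` is a standard mollifier: smooth, nonnegative, supported in the unit ball,
with total integral `1`. -/
def IsStdMollifier {n : ℕ} (ψ : En n → ℝ) : Prop :=
  ContDiff ℝ (⊤ : ℕ∞) ψ ∧ (∀ x, 0 ≤ ψ x) ∧ tsupport ψ ⊆ Metric.ball 0 1 ∧ (∫ x, ψ x) = 1

/-- The mollification `f_ε = f * ψ_ε` at scale `ε`, where `ψ_ε(x) = ε⁻ⁿ ψ(x/ε)`
(written as an integral over the ball of radius `ε`, which contains the support
of `ψ_ε`). -/
def mollify {n : ℕ} (ψ : En n → ℝ) (ε : ℝ) (f : En n → ℝ) (x : En n) : ℝ :=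
  ∫ y in Metric.ball x ε, (ε ^ n)⁻¹ * ψ (ε⁻¹ • (x - y)) * f y

/-- `a ∈ C^{0,α}(Ω)` with norm at most `M`. -/
def HolderBnd {n : ℕ} (Ω : Set (En n)) (α M : ℝ) (a : En n → ℝ) : Prop :=
  (∀ x ∈ Ω, |a x| ≤ M) ∧ ∀ x ∈ Ω, ∀ y ∈ Ω, |a x - a y| ≤ M * ‖x - y‖ ^ α

namespace MollAux

variable {n : ℕ}

/-- The scaled mollifier `φ_ε(t) = ε⁻ⁿ ψ(t/ε)`. -/
def sm (ψ : En n → ℝ) (ε : ℝ) (t : En n) : ℝ := (ε ^ n)⁻¹ * ψ (ε⁻¹ • t)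

variable {ψ : En n → ℝ} {ε : ℝ}

lemma sm_contDiff (hψ : ContDiff ℝ (⊤ : ℕ∞) ψ) : ContDiff ℝ (⊤ : ℕ∞) (sm ψ ε) :=
  contDiff_const.mul (hψ.comp ((contDiff_const (c := ε⁻¹)).smul contDiff_id))

lemma sm_eq_zero (hsupp : tsupport ψ ⊆ Metric.ball 0 1) (hε : 0 < ε)
    {t : En n} (ht : ε ≤ ‖t‖) : sm ψ ε t = 0 := by
  have h1 : ψ (ε⁻¹ • t) = 0 := by
    apply image_eq_zero_of_notMem_tsupport
    intro hmem
    have h3 := hsupp hmem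
    rw [mem_ball_zero_iff, norm_smul] at h3
    have h2 : ‖(ε⁻¹ : ℝ)‖ * ‖t‖ ≥ ε⁻¹ * ε := by
      rw [Real.norm_eq_abs, abs_of_nonneg (by positivity)]
      exact mul_le_mul_of_nonneg_left ht (by positivity)
    rw [inv_mul_cancel₀ hε.ne'] at h2
    linarith
  simp [sm, h1]

lemma sm_hasCompactSupport (hsupp : tsupport ψ ⊆ Metric.ball 0 1) (hε : 0 < ε) :
    HasCompactSupport (sm ψ ε) :=
  HasCompactSupport.intro (isCompact_closedBall (0 : En n) ε) fun t ht => by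
    refine sm_eq_zero hsupp hε ?_
    rw [mem_closedBall, dist_zero_right, not_le] at ht
    exact ht.le

lemma sm_nonneg (hψ0 : ∀ x, 0 ≤ ψ x) (hε : 0 < ε) (t : En n) : 0 ≤ sm ψ ε t :=
  mul_nonneg (by positivity) (hψ0 _)

lemma integral_comp_inv_smul (f : En n → ℝ) (hε : 0 < ε) :
    ∫ t : En n, f (ε⁻¹ • t) = ε ^ n * ∫ t, f t := by
  rw [MeasureTheory.Measure.integral_comp_smul volume f ε⁻¹]
  have hfr : (Module.finrank ℝ (En n)) = n := finrank_euclideanSpace_fin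
  rw [hfr, smul_eq_mul, inv_pow, inv_inv, abs_of_nonneg (by positivity)]

lemma sm_integral (hψ1 : (∫ x, ψ x) = 1) (hε : 0 < ε) :
    ∫ t, sm ψ ε t = 1 := by
  simp only [sm]
  rw [MeasureTheory.integral_const_mul, integral_comp_inv_smul ψ hε, hψ1]
  field_simp

lemma sm_fderiv (hψ : ContDiff ℝ (⊤ : ℕ∞) ψ) (t : En n) :
    fderiv ℝ (sm ψ ε) t = ((ε ^ n)⁻¹ * ε⁻¹) • fderiv ℝ ψ (ε⁻¹ • t) := by
  have hl : HasFDerivAt (fun s : En n => ε⁻¹ • s)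
      (ε⁻¹ • ContinuousLinearMap.id ℝ (En n)) t := by
    exact (hasFDerivAt_id t).const_smul ε⁻¹
  have hcomp : HasFDerivAt (fun s : En n => ψ (ε⁻¹ • s))
      ((fderiv ℝ ψ (ε⁻¹ • t)).comp (ε⁻¹ • ContinuousLinearMap.id ℝ (En n))) t :=
    ((hψ.differentiable (by simp) (ε⁻¹ • t)).hasFDerivAt).comp t hl
  have hcompeq : (fderiv ℝ ψ (ε⁻¹ • t)).comp (ε⁻¹ • ContinuousLinearMap.id ℝ (En n))
      = ε⁻¹ • fderiv ℝ ψ (ε⁻¹ • t) := by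
    ext v; simp
  rw [hcompeq] at hcomp
  have h : HasFDerivAt (sm ψ ε) ((ε ^ n)⁻¹ • (ε⁻¹ • fderiv ℝ ψ (ε⁻¹ • t))) t := by
    exact hcomp.const_mul ((ε ^ n)⁻¹)
  rw [h.fderiv, smul_smul]

lemma sm_fderiv_norm_integral (hψ : ContDiff ℝ (⊤ : ℕ∞) ψ) (hε : 0 < ε) :
    ∫ t, ‖fderiv ℝ (sm ψ ε) t‖ = ε⁻¹ * ∫ t, ‖fderiv ℝ ψ t‖ := by
  have h1 : ∀ t : En n, ‖fderiv ℝ (sm ψ ε) t‖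
      = ((ε ^ n)⁻¹ * ε⁻¹) * ‖fderiv ℝ ψ (ε⁻¹ • t)‖ := fun t => by
    rw [sm_fderiv hψ t, norm_smul, Real.norm_eq_abs, abs_of_nonneg (by positivity)]
  simp only [h1]
  rw [MeasureTheory.integral_const_mul,
    integral_comp_inv_smul (fun t => ‖fderiv ℝ ψ t‖) hε]
  field_simp

lemma holder_continuousOn {Ω : Set (En n)} {α M : ℝ} {a : En n → ℝ}
    (hα : 0 < α) (hM : 0 ≤ M) (ha : HolderBnd Ω α M a) : ContinuousOn a Ω := by
  intro x hx
  rw [Metric.continuousWithinAt_iff]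
  intro e he
  rcases eq_or_lt_of_le hM with hM0 | hM0
  · exact ⟨1, one_pos, fun {y} hy _ => by
      have h := ha.2 y hy x hx
      rw [← hM0, zero_mul] at h
      calc dist (a y) (a x) = |a y - a x| := Real.dist_eq _ _
        _ ≤ 0 := h
        _ < e := he⟩
  · refine ⟨(e / (2 * M)) ^ α⁻¹, by positivity, fun {y} hy hd => ?_⟩
    have h1 : |a y - a x| ≤ M * ‖y - x‖ ^ α := ha.2 y hy x hx
    have hnn : (0:ℝ) ≤ ‖y - x‖ := norm_nonneg _
    have h2 : ‖y - x‖ ^ α < ((e / (2 * M)) ^ α⁻¹ : ℝ) ^ α := by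
      apply Real.rpow_lt_rpow hnn _ hα
      rwa [dist_eq_norm] at hd
    rw [← Real.rpow_mul (by positivity), inv_mul_cancel₀ hα.ne', Real.rpow_one] at h2
    have h3 : M * ‖y - x‖ ^ α < M * (e / (2 * M)) :=
      mul_lt_mul_of_pos_left h2 hM0
    rw [Real.dist_eq]
    calc |a y - a x| ≤ M * ‖y - x‖ ^ α := h1
      _ < M * (e / (2 * M)) := h3
      _ = e / 2 := by field_simp
      _ < e := by linarith

lemma mollify_eq (hsupp : tsupport ψ ⊆ Metric.ball 0 1) (hε : 0 < ε)
    {f f' : En n → ℝ} {x : En n} (hff' : ∀ y ∈ Metric.ball x ε, f y = f' y) :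
    mollify ψ ε f x = ∫ y, f' y * sm ψ ε (x - y) := by
  rw [mollify]
  have step1 : ∫ y in Metric.ball x ε, (ε ^ n)⁻¹ * ψ (ε⁻¹ • (x - y)) * f y
      = ∫ y in Metric.ball x ε, f' y * sm ψ ε (x - y) := by
    apply setIntegral_congr_fun measurableSet_ball
    intro y hy
    simp only [sm]
    rw [← hff' y hy]
    ring
  rw [step1]
  apply setIntegral_eq_integral_of_forall_compl_eq_zero
  intro y hy
  have h : ε ≤ ‖x - y‖ := by
    rw [Metric.mem_ball, not_lt, dist_comm] at hy
    rwa [← dist_eq_norm]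
  rw [sm_eq_zero hsupp hε h, mul_zero]

end MollAux

/-- for `Ω ⊆ ℝⁿ` open, `V ⋐ Ω`, `α ∈ (0,1)` and `a, b ∈ C^{0,α}(Ω)`
with Hölder norms at most `M`, the commutator of mollification and multiplication
satisfies `‖(ab)_ε − a_ε b_ε‖_{C^j(V)} ≤ C ε^{2α−j}` for `j = 0, 1` and all small
`ε > 0`, with `C = C(M)` depending only on the Hölder norms (and `ψ, Ω, V, α`). -/
theorem mollification_commutator_estimate
    (n : ℕ) (hn : 0 < n) (Ω V : Set (En n)) (hΩ : IsOpen Ω)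
    (hV : IsCompact (closure V)) (hVΩ : closure V ⊆ Ω)
    (α : ℝ) (hα : 0 < α ∧ α < 1)
    (ψ : En n → ℝ) (hψ : IsStdMollifier ψ) (M : ℝ) (hM : 0 ≤ M) :
    ∃ C : ℝ, 0 ≤ C ∧ ∃ ε₀ : ℝ, 0 < ε₀ ∧
      ∀ a b : En n → ℝ, HolderBnd Ω α M a → HolderBnd Ω α M b →
        ∀ ε : ℝ, 0 < ε → ε < ε₀ → ∀ x ∈ V,
          |mollify ψ ε (fun y => a y * b y) x - mollify ψ ε a x * mollify ψ ε b x|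
            ≤ C * ε ^ (2 * α) ∧
          ‖fderiv ℝ (fun z =>
              mollify ψ ε (fun y => a y * b y) z - mollify ψ ε a z * mollify ψ ε b z) x‖
            ≤ C * ε ^ (2 * α - 1) := by
  classical
  obtain ⟨hα0, hα1⟩ := hα
  obtain ⟨hψc, hψ0, hψsupp, hψ1⟩ := hψ
  obtain ⟨δ, hδ0, hδΩ⟩ : ∃ δ > 0, Metric.thickening δ (closure V) ⊆ Ω :=
    hV.exists_thickening_subset_open hΩ hVΩ
  set Cψ := ∫ t, ‖fderiv ℝ ψ t‖ with hCψdef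
  have hCψ0 : 0 ≤ Cψ := integral_nonneg fun t => norm_nonneg _
  have h4α : (0:ℝ) ≤ 4 ^ α := (Real.rpow_nonneg (by norm_num) α)
  refine ⟨(1 + Cψ) * (M ^ 2 * 4 ^ α), by positivity, δ / 2, by positivity, ?_⟩
  intro a b ha hb ε hε hεδ x hxV
  -- scaled mollifier facts
  set φ : En n → ℝ := MollAux.sm ψ ε with hφdef
  have hφc : ContDiff ℝ (⊤ : ℕ∞) φ := MollAux.sm_contDiff hψc
  have hφz : ∀ {t : En n}, ε ≤ ‖t‖ → φ t = 0 := fun ht => MollAux.sm_eq_zero hψsupp hε ht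
  have hφcs : HasCompactSupport φ := MollAux.sm_hasCompactSupport hψsupp hε
  have hφ1 : ∫ t, φ t = 1 := MollAux.sm_integral hψ1 hε
  have hφ0 : ∀ t, 0 ≤ φ t := MollAux.sm_nonneg hψ0 hε
  have hφint : Integrable φ := hφc.continuous.integrable_of_hasCompactSupport hφcs
  set φ' := fderiv ℝ φ with hφ'def
  have hφ'c : Continuous φ' := hφc.continuous_fderiv (by simp)
  have hφ'cs : HasCompactSupport φ' := hφcs.fderiv ℝ
  have hφ'int : Integrable φ' := hφ'c.integrable_of_hasCompactSupport hφ'cs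
  have hφ'norm : ∫ t, ‖φ' t‖ = ε⁻¹ * Cψ := MollAux.sm_fderiv_norm_integral hψc hε
  have hφ'z : ∀ {t : En n}, ε < ‖t‖ → φ' t = 0 := by
    intro t ht
    have hts : tsupport φ ⊆ closedBall 0 ε := by
      apply closure_minimal _ Metric.isClosed_closedBall
      intro s hs
      rw [mem_closedBall, dist_zero_right]
      by_contra hc
      push_neg at hc
      exact hs (hφz hc.le)
    have h1 : t ∉ tsupport φ := fun hmem => by
      have h2 := hts hmem; rw [mem_closedBall, dist_zero_right] at h2; linarith
    by_contra h
    exact h1 (support_fderiv_subset ℝ (Function.mem_support.2 h))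
  -- geometry
  set U := Metric.thickening (δ/2) (closure V) with hUdef
  have hUopen : IsOpen U := Metric.isOpen_thickening
  have hxU : x ∈ U := Metric.self_subset_thickening (by positivity) _ (subset_closure hxV)
  have hUΩ : ∀ z ∈ U, ∀ y : En n, dist y z ≤ ε → y ∈ Ω := by
    intro z hz y hy
    obtain ⟨w, hw, hzw⟩ := Metric.mem_thickening_iff.1 hz
    apply hδΩ
    rw [Metric.mem_thickening_iff]
    refine ⟨w, hw, ?_⟩
    calc dist y w ≤ dist y z + dist z w := dist_triangle _ _ _
      _ < ε + δ/2 := by linarith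
      _ ≤ δ := by linarith
  -- indicator functions
  set ta := Ω.indicator a with htadef
  set tb := Ω.indicator b with htbdef
  set tc := Ω.indicator (fun y => a y * b y) with htcdef
  have htc_mul : ∀ t, tc t = ta t * tb t := by
    intro t; by_cases ht : t ∈ Ω <;> simp [htadef, htbdef, htcdef, ht]
  have hbd : ∀ (f : En n → ℝ), HolderBnd Ω α M f → ∀ t, |Ω.indicator f t| ≤ M := by
    intro f hf t; by_cases ht : t ∈ Ω
    · simpa [ht] using hf.1 t ht
    · simpa [ht] using hM
  have hmeasind : ∀ (f : En n → ℝ), HolderBnd Ω α M f →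
      AEStronglyMeasurable (Ω.indicator f) volume := fun f hf =>
    (aestronglyMeasurable_indicator_iff hΩ.measurableSet).2
      ((MollAux.holder_continuousOn hα0 hM hf).aestronglyMeasurable hΩ.measurableSet)
  have hmta : AEStronglyMeasurable ta volume := hmeasind a ha
  have hmtb : AEStronglyMeasurable tb volume := hmeasind b hb
  have hmtc : AEStronglyMeasurable tc volume := by
    have h : tc = fun t => ta t * tb t := funext htc_mul
    rw [h]; exact hmta.mul hmtb
  have hlocbdd : ∀ (g : En n → ℝ) (K : ℝ), AEStronglyMeasurable g volume →
      (∀ t, |g t| ≤ K) → LocallyIntegrable g volume := by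
    intro g K hg hgK
    rw [locallyIntegrable_iff]
    intro k hk
    exact Measure.integrableOn_of_bounded hk.measure_lt_top.ne hg
      (Filter.Eventually.of_forall fun t => by simpa [Real.norm_eq_abs] using hgK t)
  have hbta : ∀ t, |ta t| ≤ M := hbd a ha
  have hbtb : ∀ t, |tb t| ≤ M := hbd b hb
  have hbtc : ∀ t, |tc t| ≤ M * M := fun t => by
    rw [htc_mul t, abs_mul]
    exact mul_le_mul (hbta t) (hbtb t) (abs_nonneg _) hM
  have hlocta : LocallyIntegrable ta volume := hlocbdd ta M hmta hbta
  have hloctb : LocallyIntegrable tb volume := hlocbdd tb M hmtb hbtb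
  have hloctc : LocallyIntegrable tc volume := hlocbdd tc (M*M) hmtc hbtc
  -- integrable translates
  have hIφx : Integrable (fun s => φ (x - s)) := (integrable_comp_sub_left φ x).2 hφint
  have hIta : Integrable (fun s => ta s * φ (x - s)) :=
    hIφx.bdd_mul (c := M) hmta (Filter.Eventually.of_forall fun s => by simpa [Real.norm_eq_abs] using hbta s)
  have hItb : Integrable (fun s => tb s * φ (x - s)) :=
    hIφx.bdd_mul (c := M) hmtb (Filter.Eventually.of_forall fun s => by simpa [Real.norm_eq_abs] using hbtb s)
  have hItc : Integrable (fun s => tc s * φ (x - s)) :=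
    hIφx.bdd_mul (c := M*M) hmtc (Filter.Eventually.of_forall fun s => by simpa [Real.norm_eq_abs] using hbtc s)
  set Ax := ∫ s, ta s * φ (x - s) with hAxdef
  set Bx := ∫ s, tb s * φ (x - s) with hBxdef
  -- smallness
  have small : ∀ (f : En n → ℝ), HolderBnd Ω α M f → ∀ z ∈ U, ∀ t : En n, dist t z ≤ ε →
      |Ω.indicator f t - ∫ s, Ω.indicator f s * φ (z - s)| ≤ M * (2*ε) ^ α := by
    intro f hf z hz t ht
    set g := Ω.indicator f with hgdef
    have htΩ : t ∈ Ω := hUΩ z hz t ht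
    have hIφz : Integrable (fun s => φ (z - s)) := (integrable_comp_sub_left φ z).2 hφint
    have hIg : Integrable (fun s => g s * φ (z - s)) :=
      hIφz.bdd_mul (c := M) (hmeasind f hf) (Filter.Eventually.of_forall fun s => by simpa [Real.norm_eq_abs] using hbd f hf s)
    have hsub : g t - ∫ s, g s * φ (z - s) = ∫ s, (g t - g s) * φ (z - s) := by
      have h1 : ∫ s, (g t - g s) * φ (z - s)
          = (∫ s, g t * φ (z-s)) - ∫ s, g s * φ (z-s) := by
        rw [← integral_sub (hIφz.const_mul _) hIg]
        congr 1; funext s; ring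
      rw [h1, MeasureTheory.integral_const_mul, integral_sub_left_eq_self φ volume z, hφ1,
        mul_one]
    rw [hsub]
    have hptbd : ∀ s, ‖(g t - g s) * φ (z - s)‖ ≤ (M * (2*ε)^α) * φ (z - s) := by
      intro s
      by_cases hs : s ∈ Metric.ball z ε
      · have hsΩ : s ∈ Ω := hUΩ z hz s (le_of_lt (Metric.mem_ball.1 hs))
        have h2 : |g t - g s| ≤ M * (2*ε)^α := by
          rw [hgdef, indicator_of_mem htΩ, indicator_of_mem hsΩ]
          refine (hf.2 t htΩ s hsΩ).trans ?_
          have hts : ‖t - s‖ ≤ 2*ε := by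
            have htriangle : dist t s ≤ dist t z + dist z s := dist_triangle _ _ _
            have hzs : dist z s < ε := by rw [dist_comm]; exact Metric.mem_ball.1 hs
            rw [← dist_eq_norm]; linarith
          exact mul_le_mul_of_nonneg_left
            (Real.rpow_le_rpow (norm_nonneg _) hts (le_of_lt hα0)) hM
        rw [Real.norm_eq_abs, abs_mul, abs_of_nonneg (hφ0 _)]
        exact mul_le_mul_of_nonneg_right h2 (hφ0 _)
      · have h0 : φ (z - s) = 0 := by
          apply hφz
          rw [Metric.mem_ball, not_lt, dist_comm, dist_eq_norm] at hs
          exact hs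
        simp [h0]
    rw [← Real.norm_eq_abs]
    calc ‖∫ s, (g t - g s) * φ (z - s)‖
        ≤ ∫ s, (M * (2*ε)^α) * φ (z - s) :=
          norm_integral_le_of_norm_le (hIφz.const_mul _) (Filter.Eventually.of_forall hptbd)
      _ = M * (2*ε)^α := by
          rw [MeasureTheory.integral_const_mul, integral_sub_left_eq_self φ volume z, hφ1,
            mul_one]
  have hsmallA : ∀ t : En n, dist t x ≤ ε → |ta t - Ax| ≤ M * (2*ε)^α :=
    fun t ht => small a ha x hxU t ht
  have hsmallB : ∀ t : En n, dist t x ≤ ε → |tb t - Bx| ≤ M * (2*ε)^α :=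
    fun t ht => small b hb x hxU t ht
  have hprodbd : (M * (2*ε)^α) * (M * (2*ε)^α) = M^2 * 4^α * ε^(2*α) := by
    have h4 : ((2*ε) : ℝ)^α = 2^α * ε^α := Real.mul_rpow (by norm_num) hε.le
    have h2e : (2:ℝ)^α * 2^α = 4^α := by
      rw [← Real.mul_rpow (by norm_num) (by norm_num)]; norm_num
    have h3 : ε^α * ε^α = ε^(2*α) := by
      rw [← Real.rpow_add hε]; ring_nf
    calc (M * (2*ε)^α) * (M * (2*ε)^α) = M^2 * ((2*ε)^α * (2*ε)^α) := by ring
      _ = M^2 * ((2^α * 2^α) * (ε^α * ε^α)) := by rw [h4]; ring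
      _ = M^2 * 4^α * ε^(2*α) := by rw [h2e, h3]; ring
  -- mollify to explicit integral form
  have hmoll : ∀ (f : En n → ℝ), ∀ z ∈ U,
      mollify ψ ε f z = ∫ s, Ω.indicator f s * φ (z - s) := by
    intro f z hz
    exact MollAux.mollify_eq hψsupp hε fun y hy =>
      (indicator_of_mem (hUΩ z hz y (Metric.mem_ball.1 hy).le) f).symm
  constructor
  · -- C⁰ estimate
    rw [hmoll (fun y => a y * b y) x hxU, hmoll a x hxU, hmoll b x hxU]
    have hid : (∫ s, tc s * φ (x - s)) - Ax * Bx
        = ∫ s, (ta s - Ax) * (tb s - Bx) * φ (x - s) := by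
      have hexp : (fun s => (ta s - Ax) * (tb s - Bx) * φ (x - s))
          = fun s => tc s * φ (x - s) - Ax * (tb s * φ (x - s))
            - Bx * (ta s * φ (x - s)) + (Ax * Bx) * φ (x - s) := by
        funext s; rw [htc_mul s]; ring
      have hI2 : Integrable (fun s => Ax * (tb s * φ (x - s))) volume := hItb.const_mul _
      have hI3 : Integrable (fun s => Bx * (ta s * φ (x - s))) volume := hIta.const_mul _
      have hI4 : Integrable (fun s => (Ax * Bx) * φ (x - s)) volume := hIφx.const_mul _
      have hI12 : Integrable
          (fun s => tc s * φ (x - s) - Ax * (tb s * φ (x - s))) volume := hItc.sub hI2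
      have hI123 : Integrable (fun s => tc s * φ (x - s) - Ax * (tb s * φ (x - s))
          - Bx * (ta s * φ (x - s))) volume := hI12.sub hI3
      rw [hexp, integral_add hI123 hI4, integral_sub hI12 hI3, integral_sub hItc hI2,
        MeasureTheory.integral_const_mul, MeasureTheory.integral_const_mul,
        MeasureTheory.integral_const_mul, integral_sub_left_eq_self φ volume x, hφ1]
      ring
    rw [← htcdef, ← htadef, ← htbdef, ← hAxdef, ← hBxdef, hid]
    have hpt : ∀ s, ‖(ta s - Ax) * (tb s - Bx) * φ (x - s)‖
        ≤ (M^2 * 4^α * ε^(2*α)) * φ (x - s) := by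
      intro s
      by_cases hs : dist s x ≤ ε
      · rw [Real.norm_eq_abs, abs_mul, abs_mul, abs_of_nonneg (hφ0 _)]
        refine mul_le_mul_of_nonneg_right ?_ (hφ0 _)
        rw [← hprodbd]
        exact mul_le_mul (hsmallA s hs) (hsmallB s hs) (abs_nonneg _)
          (by positivity)
      · have h0 : φ (x - s) = 0 := by
          apply hφz
          rw [not_le, dist_comm, dist_eq_norm] at hs
          exact hs.le
        simp [h0]
    rw [← Real.norm_eq_abs]
    calc ‖∫ s, (ta s - Ax) * (tb s - Bx) * φ (x - s)‖
        ≤ ∫ s, (M^2 * 4^α * ε^(2*α)) * φ (x - s) :=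
          norm_integral_le_of_norm_le (hIφx.const_mul _) (Filter.Eventually.of_forall hpt)
      _ = M^2 * 4^α * ε^(2*α) := by
          rw [MeasureTheory.integral_const_mul, integral_sub_left_eq_self φ volume x, hφ1,
            mul_one]
      _ ≤ (1 + Cψ) * (M ^ 2 * 4 ^ α) * ε ^ (2 * α) := by
          have h1 : M^2 * 4^α ≤ (1 + Cψ) * (M^2 * 4^α) :=
            le_mul_of_one_le_left (by positivity) (by linarith)
          exact mul_le_mul_of_nonneg_right h1 (Real.rpow_nonneg hε.le _)
  · -- C¹ estimate
    set L : ℝ →L[ℝ] ℝ →L[ℝ] ℝ := ContinuousLinearMap.lsmul ℝ ℝ with hLdef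
    set L' := L.precompR (En n) with hL'def2
    have hL'smul : ∀ (r : ℝ) (T : En n →L[ℝ] ℝ), L' r T = r • T := by
      intro r T; ext v
      simp [hL'def2, hLdef, smul_eq_mul]
    have hφC1 : ContDiff ℝ 1 φ := hφc.of_le (by simp)
    have hconv_eq : ∀ (g : En n → ℝ) (z : En n),
        (g ⋆[L] φ) z = ∫ s, g s * φ (z - s) := by
      intro g z
      rw [convolution_def]
      simp only [hLdef, ContinuousLinearMap.lsmul_apply, smul_eq_mul]
    have hconv'_eq : ∀ (g : En n → ℝ) (z : En n),
        (g ⋆[L'] φ') z = ∫ s, g s • φ' (z - s) := by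
      intro g z
      rw [convolution_def]
      simp only [hL'smul]
    have hda := hφcs.hasFDerivAt_convolution_right L hlocta hφC1 x
    have hdb := hφcs.hasFDerivAt_convolution_right L hloctb hφC1 x
    have hdc := hφcs.hasFDerivAt_convolution_right L hloctc hφC1 x
    have hF : HasFDerivAt (fun z => (tc ⋆[L] φ) z - (ta ⋆[L] φ) z * (tb ⋆[L] φ) z)
        ((tc ⋆[L'] φ') x - ((ta ⋆[L] φ) x • (tb ⋆[L'] φ') x
          + (tb ⋆[L] φ) x • (ta ⋆[L'] φ') x)) x :=
      hdc.sub (hda.mul hdb)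
    have hGeq : (fun z => mollify ψ ε (fun y => a y * b y) z
          - mollify ψ ε a z * mollify ψ ε b z)
        =ᶠ[nhds x] (fun z => (tc ⋆[L] φ) z - (ta ⋆[L] φ) z * (tb ⋆[L] φ) z) := by
      filter_upwards [hUopen.mem_nhds hxU] with z hz
      rw [hmoll (fun y => a y * b y) z hz, hmoll a z hz, hmoll b z hz]
      simp only [← htadef, ← htbdef, ← htcdef]
      rw [← hconv_eq tc z, ← hconv_eq ta z, ← hconv_eq tb z]
    rw [hGeq.fderiv_eq, hF.fderiv]
    -- the integral of φ' vanishes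
    have honeconv : ((fun _ : En n => (1:ℝ)) ⋆[L] φ) = fun _ => (1:ℝ) := by
      funext z
      rw [hconv_eq (fun _ => (1:ℝ)) z]
      simp only [one_mul]
      rw [integral_sub_left_eq_self φ volume z, hφ1]
    have hone1 : LocallyIntegrable (fun _ : En n => (1:ℝ)) volume :=
      locallyIntegrable_const (1:ℝ)
    have honed := hφcs.hasFDerivAt_convolution_right L hone1 hφC1 x
    rw [honeconv] at honed
    have hZ0 : ((fun _ : En n => (1:ℝ)) ⋆[L'] φ') x = 0 :=
      honed.unique (hasFDerivAt_const 1 x)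
    have hZint : (∫ s, φ' (x - s)) = (0 : En n →L[ℝ] ℝ) := by
      have h := hZ0
      rw [hconv'_eq] at h
      simpa [one_smul] using h
    -- integrability of the operator-valued integrands
    have hIφ'x : Integrable (fun s => φ' (x - s)) :=
      (integrable_comp_sub_left φ' x).2 hφ'int
    have hIca : Integrable (fun s => ta s • φ' (x - s)) := by
      have h := hφ'cs.convolutionExists_right L' hlocta hφ'c x
      simpa only [ConvolutionExistsAt, hL'smul] using h
    have hIcb : Integrable (fun s => tb s • φ' (x - s)) := by
      have h := hφ'cs.convolutionExists_right L' hloctb hφ'c x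
      simpa only [ConvolutionExistsAt, hL'smul] using h
    have hIcc : Integrable (fun s => tc s • φ' (x - s)) := by
      have h := hφ'cs.convolutionExists_right L' hloctc hφ'c x
      simpa only [ConvolutionExistsAt, hL'smul] using h
    have hca : (ta ⋆[L] φ) x = Ax := (hconv_eq ta x).trans hAxdef.symm
    have hcb : (tb ⋆[L] φ) x = Bx := (hconv_eq tb x).trans hBxdef.symm
    have hid1 : (tc ⋆[L'] φ') x - ((ta ⋆[L] φ) x • (tb ⋆[L'] φ') x
          + (tb ⋆[L] φ) x • (ta ⋆[L'] φ') x)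
        = ∫ s, ((ta s - Ax) * (tb s - Bx)) • φ' (x - s) := by
      rw [hca, hcb, hconv'_eq tc x, hconv'_eq ta x, hconv'_eq tb x]
      have hexp : (fun s => ((ta s - Ax) * (tb s - Bx)) • φ' (x - s))
          = fun s => tc s • φ' (x - s) - Ax • (tb s • φ' (x - s))
            - Bx • (ta s • φ' (x - s)) + (Ax * Bx) • φ' (x - s) := by
        funext s
        have h5 : (ta s - Ax) * (tb s - Bx)
            = ta s * tb s - Ax * tb s - Bx * ta s + Ax * Bx := by ring
        rw [h5, ← htc_mul s, add_smul, sub_smul, sub_smul, mul_smul, mul_smul]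
      have hI2 : Integrable (fun s => Ax • (tb s • φ' (x - s))) volume := hIcb.smul Ax
      have hI3 : Integrable (fun s => Bx • (ta s • φ' (x - s))) volume := hIca.smul Bx
      have hI4 : Integrable (fun s => (Ax * Bx) • φ' (x - s)) volume := hIφ'x.smul (Ax * Bx)
      have hI12 : Integrable
          (fun s => tc s • φ' (x - s) - Ax • (tb s • φ' (x - s))) volume := hIcc.sub hI2
      have hI123 : Integrable (fun s => tc s • φ' (x - s) - Ax • (tb s • φ' (x - s))
          - Bx • (ta s • φ' (x - s))) volume := hI12.sub hI3
      rw [hexp, integral_add hI123 hI4, integral_sub hI12 hI3, integral_sub hIcc hI2,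
        integral_smul, integral_smul, integral_smul, hZint, smul_zero, add_zero]
      abel
    rw [hid1]
    have hpt1 : ∀ s, ‖((ta s - Ax) * (tb s - Bx)) • φ' (x - s)‖
        ≤ (M^2 * 4^α * ε^(2*α)) * ‖φ' (x - s)‖ := by
      intro s
      by_cases hs : dist s x ≤ ε
      · rw [norm_smul, Real.norm_eq_abs, abs_mul]
        refine mul_le_mul_of_nonneg_right ?_ (norm_nonneg _)
        rw [← hprodbd]
        exact mul_le_mul (hsmallA s hs) (hsmallB s hs) (abs_nonneg _) (by positivity)
      · have h0 : φ' (x - s) = 0 := by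
          apply hφ'z
          rw [not_le, dist_comm, dist_eq_norm] at hs
          exact hs
        simp [h0]
    have hnormint : ∫ s, ‖φ' (x - s)‖ = ε⁻¹ * Cψ := by
      rw [integral_sub_left_eq_self (fun t => ‖φ' t‖) volume x]
      exact hφ'norm
    have hrpow : ε ^ (2*α - 1) = ε ^ (2*α) * ε⁻¹ := by
      rw [Real.rpow_sub hε, Real.rpow_one, div_eq_mul_inv]
    calc ‖∫ s, ((ta s - Ax) * (tb s - Bx)) • φ' (x - s)‖
        ≤ ∫ s, (M^2 * 4^α * ε^(2*α)) * ‖φ' (x - s)‖ :=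
          norm_integral_le_of_norm_le ((hIφ'x.norm).const_mul _)
            (Filter.Eventually.of_forall hpt1)
      _ = (M^2 * 4^α * ε^(2*α)) * (ε⁻¹ * Cψ) := by
          rw [MeasureTheory.integral_const_mul, hnormint]
      _ = (Cψ * (M^2 * 4^α)) * ε^(2*α - 1) := by rw [hrpow]; ring
      _ ≤ ((1 + Cψ) * (M^2 * 4^α)) * ε^(2*α - 1) := by
          apply mul_le_mul_of_nonneg_right _ (Real.rpow_nonneg hε.le _)
          apply mul_le_mul_of_nonneg_right (by linarith) (by positivity)
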